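/- arXiv:2303.01336 — 3 statements merged into one kernel-verified Lean document; each statement's English description precedes it below -/
import Mathlib

section
/- Let (X, ω) be a measure space, p ∈ (0, 1], and f ∈ L^{p,∞}(X, ω). Then ‖f‖_{L^{p,∞}(X,ω)} is comparable, up to a constant depending only on p, to sup_{A} inf_{B} ω(A)^{1/p - 1} · ‖f·1_B‖_{L^1(X,ω)}, where the supremum is over measurable A with 0 < ω(A) < ∞ and the infimum is over measurable B ⊆ A with ω(B) ≥ ω(A)/2. -/
open MeasureTheory ENNReal Set Filter

variable {X : Type*} [MeasurableSpace X]

/-- A σ-finite setting: a σ-finite measure `ω` and a σ-finite outer measure `μ`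
such that `μ`-null sets are `ω`-null. -/
structure SigmaFiniteSetting (μ : MeasureTheory.OuterMeasure X)
    (ω : MeasureTheory.Measure X) : Prop where
  omega_sf : SigmaFinite ω
  mu_sf : ∃ B : ℕ → Set X, (⋃ n, B n) = Set.univ ∧ ∀ n, μ (B n) ≠ ∞
  ac : ∀ A : Set X, μ A = 0 → ω A = 0

/-- The generating collection `Σ_μ` of measurable sets with `μ(A) ∉ {0,∞}`. -/
def goodSets (μ : MeasureTheory.OuterMeasure X) : Set (Set X) :=
  {A | MeasurableSet A ∧ μ A ≠ 0 ∧ μ A ≠ ∞}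

/-- The size `ℓ^r_ω(f)(A) = μ(A)^{-1/r} ‖f 1_A‖_{L^r(ω)}`. -/
noncomputable def ellr (μ : MeasureTheory.OuterMeasure X) (ω : MeasureTheory.Measure X)
    (r : ℝ) (f : X → ℝ≥0∞) (A : Set X) : ℝ≥0∞ :=
  μ A ^ (-(1/r)) * (∫⁻ x in A, f x ^ r ∂ω) ^ (1/r)

/-- The size `ℓ^∞_ω(f)(A) = ‖f 1_A‖_{L^∞(ω)}`. -/
noncomputable def ellInfty (ω : MeasureTheory.Measure X) (f : X → ℝ≥0∞) (A : Set X) : ℝ≥0∞ :=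
  essSup (A.indicator f) ω

/-- `ℓ^r_ω` for `r ∈ (0,∞]`. -/
noncomputable def ellre (μ : MeasureTheory.OuterMeasure X) (ω : MeasureTheory.Measure X)
    (r : ℝ≥0∞) : (X → ℝ≥0∞) → Set X → ℝ≥0∞ :=
  if r = ∞ then ellInfty ω else ellr μ ω r.toReal

/-- The outer `L^∞_μ(S)` quasi-norm: `sup_{A ∈ 𝒜} S(f)(A)`. -/
noncomputable def outLinf (𝒜 : Set (Set X))
    (S : (X → ℝ≥0∞) → Set X → ℝ≥0∞) (f : X → ℝ≥0∞) : ℝ≥0∞ :=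
  ⨆ A ∈ 𝒜, S f A

/-- The super level measure `μ(S(f) > l)`. -/
noncomputable def slm (μ : MeasureTheory.OuterMeasure X) (𝒜 : Set (Set X))
    (S : (X → ℝ≥0∞) → Set X → ℝ≥0∞) (f : X → ℝ≥0∞) (l : ℝ≥0∞) : ℝ≥0∞ :=
  ⨅ (E : Set X) (_ : MeasurableSet E) (_ : outLinf 𝒜 S (Eᶜ.indicator f) ≤ l), μ E

/-- The outer `L^{p,∞}_μ(S)` quasi-norm (weak type), `p ∈ (0,∞)` real. -/
noncomputable def outWeak (μ : MeasureTheory.OuterMeasure X) (𝒜 : Set (Set X))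
    (S : (X → ℝ≥0∞) → Set X → ℝ≥0∞) (p : ℝ) (f : X → ℝ≥0∞) : ℝ≥0∞ :=
  ⨆ (l : ℝ≥0∞) (_ : 0 < l), l * (slm μ 𝒜 S f l) ^ (1/p)

/-- The outer Lorentz `L^{p,q}_μ(S)` quasi-norm, `p, q ∈ (0,∞)` real. -/
noncomputable def outLorentz (μ : MeasureTheory.OuterMeasure X) (𝒜 : Set (Set X))
    (S : (X → ℝ≥0∞) → Set X → ℝ≥0∞) (p q : ℝ) (f : X → ℝ≥0∞) : ℝ≥0∞ :=
  ENNReal.ofReal p ^ (1/q) *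
    (∫⁻ t in Set.Ioi (0:ℝ),
      (ENNReal.ofReal t * (slm μ 𝒜 S f (ENNReal.ofReal t)) ^ (1/p)) ^ q *
        (ENNReal.ofReal t)⁻¹) ^ (1/q)

/-- The outer Lorentz `L^{p,q}_μ(S)` quasi-norm for `p, q ∈ (0,∞]`. -/
noncomputable def outLpq (μ : MeasureTheory.OuterMeasure X) (𝒜 : Set (Set X))
    (S : (X → ℝ≥0∞) → Set X → ℝ≥0∞) (p q : ℝ≥0∞) (f : X → ℝ≥0∞) : ℝ≥0∞ :=
  if p = ∞ then outLinf 𝒜 S f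
  else if q = ∞ then outWeak μ 𝒜 S p.toReal f
  else outLorentz μ 𝒜 S p.toReal q.toReal f

/-- The size `S_r(f)(A) = (S(|f|^r)(A))^{1/r}` for `r ∈ (0,∞)`. -/
noncomputable def sizeR (S : (X → ℝ≥0∞) → Set X → ℝ≥0∞) (r : ℝ)
    (f : X → ℝ≥0∞) (A : Set X) : ℝ≥0∞ :=
  (S (fun x => f x ^ r) A) ^ (1/r)

/-- `S_r` for `r ∈ (0,∞]`; for `r = ∞` defined via the limit (as a limsup). -/
noncomputable def sizeRE (S : (X → ℝ≥0∞) → Set X → ℝ≥0∞) (r : ℝ≥0∞)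
    (f : X → ℝ≥0∞) (A : Set X) : ℝ≥0∞ :=
  if r = ∞ then Filter.limsup (fun s : ℝ => sizeR S s f A) Filter.atTop
  else sizeR S r.toReal f A

/-! For a level `l > 0`, every `B ⊆ {l < F}` with `ω B ≥ ω {l < F} / 2` has
`∫_B F ≥ l ω B ≥ l ω {l < F} / 2`, which bounds the weak quasi-norm `W` by twice the
supremum. Conversely, given `A`, Chebyshev's inequality `ω {λ < F} ≤ (W / λ) ^ p` lets us
choose `λ` with `ω {λ < F} ≤ ω A / 2`, and we take `B = A ∩ {F ≤ λ}`. By the layer-cake formula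
`∫_B F ≤ ∫_0^λ min (ω A) ((W / t) ^ p) dt`; bounding the minimum by the geometric mean
`ω A ^ (1/2) (W / t) ^ (p/2)` leaves an integrable singularity for `p ≤ 1`, and the result is
`ω A ^ (1/p - 1) ∫_B F ≤ 2 ^ (1/p + 1/2) W`. -/

theorem lintegral_le_lintegral_meas_ofReal_lt {μ : Measure X} {F : X → ℝ≥0∞}
    (hF : AEMeasurable F μ) (hF_top : ∀ᵐ x ∂μ, F x ≠ ∞) :
    ∫⁻ x, F x ∂μ ≤ ∫⁻ t in Ioi 0, μ {x | ENNReal.ofReal t < F x} :=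
  calc ∫⁻ x, F x ∂μ = ∫⁻ x, ENNReal.ofReal (F x).toReal ∂μ :=
        lintegral_congr_ae (hF_top.mono fun _ hx => (ofReal_toReal hx).symm)
    _ = ∫⁻ t in Ioi 0, μ {x | t < (F x).toReal} :=
        lintegral_eq_lintegral_meas_lt μ (ae_of_all _ fun _ => toReal_nonneg) hF.ennreal_toReal
    _ ≤ ∫⁻ t in Ioi 0, μ {x | ENNReal.ofReal t < F x} :=
        setLIntegral_mono' measurableSet_Ioi fun _ ht => measure_mono fun _ hx =>
          (ENNReal.ofReal_lt_ofReal_iff (ht.out.trans hx)).2 hx |>.trans_le ofReal_toReal_le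

theorem lintegral_Ioc_ofReal_rpow_neg_le {q Λ : ℝ} (hq : q ≤ 1/2) (hΛ : 0 ≤ Λ) :
    ∫⁻ t in Ioc 0 Λ, ENNReal.ofReal t ^ (-q) ≤ 2 * ENNReal.ofReal Λ ^ (1 - q) := by
  have hint : IntegrableOn (fun t : ℝ => t ^ (-q)) (Ioc 0 Λ) := by
    have h := intervalIntegral.intervalIntegrable_rpow' (a := 0) (b := Λ) (r := -q) (by linarith)
    rwa [intervalIntegrable_iff, uIoc_of_le hΛ] at h
  have hq1 : 0 < 1 - q := by linarith
  calc ∫⁻ t in Ioc 0 Λ, ENNReal.ofReal t ^ (-q)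
      = ∫⁻ t in Ioc 0 Λ, ENNReal.ofReal (t ^ (-q)) :=
        setLIntegral_congr_fun measurableSet_Ioc fun _ ht => ofReal_rpow_of_pos ht.1
    _ = ENNReal.ofReal (∫ t in Ioc 0 Λ, t ^ (-q)) :=
        (ofReal_integral_eq_lintegral_ofReal hint ((ae_restrict_iff' measurableSet_Ioc).2
          (ae_of_all _ fun t ht => Real.rpow_nonneg ht.1.le _))).symm
    _ = ENNReal.ofReal (Λ ^ (1 - q) / (1 - q)) := by
        rw [← intervalIntegral.integral_of_le hΛ, integral_rpow (Or.inl (by linarith)),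
          Real.zero_rpow (by linarith), sub_zero, neg_add_eq_sub]
    _ ≤ ENNReal.ofReal (2 * Λ ^ (1 - q)) := by
        gcongr
        rw [div_le_iff₀ hq1]
        nlinarith [Real.rpow_nonneg hΛ (1 - q)]
    _ = 2 * ENNReal.ofReal Λ ^ (1 - q) := by
        rw [ENNReal.ofReal_mul zero_le_two, ENNReal.ofReal_ofNat, ofReal_rpow_of_nonneg hΛ hq1.le]

section WeakLp

variable (ω : Measure X) (p : ℝ) (F : X → ℝ≥0∞)

noncomputable def weakLpNorm : ℝ≥0∞ :=
  ⨆ (l : ℝ≥0∞) (_ : 0 < l), l * ω {x | l < F x} ^ (1/p)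

-- The inner infimum runs over `Σ''_ω(A)`.
noncomputable def halfSubsetNorm : ℝ≥0∞ :=
  ⨆ (A : Set X) (_ : MeasurableSet A) (_ : ω A ≠ 0) (_ : ω A ≠ ∞),
    ⨅ (B : Set X) (_ : MeasurableSet B) (_ : B ⊆ A) (_ : ω A / 2 ≤ ω B),
      ω A ^ (1/p - 1) * ∫⁻ x in B, F x ∂ω

variable {ω p F}

theorem mul_meas_lt_rpow_le_weakLpNorm {l : ℝ≥0∞} (hl : 0 < l) :
    l * ω {x | l < F x} ^ (1/p) ≤ weakLpNorm ω p F :=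
  le_iSup₂ (f := fun l (_ : 0 < l) => l * ω {x | l < F x} ^ (1/p)) l hl

theorem meas_lt_le_weakLpNorm_div_rpow (hp : 0 < p) {t : ℝ≥0∞} (ht0 : t ≠ 0) :
    ω {x | t < F x} ≤ (weakLpNorm ω p F / t) ^ p := by
  rcases eq_or_ne t ∞ with rfl | htop
  · simp
  have h := mul_meas_lt_rpow_le_weakLpNorm (ω := ω) (F := F) (p := p) (pos_iff_ne_zero.2 ht0)
  rw [mul_comm, ← ENNReal.le_div_iff_mul_le (Or.inl ht0) (Or.inl htop)] at h
  calc ω {x | t < F x} = (ω {x | t < F x} ^ (1/p)) ^ p := by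
        rw [← ENNReal.rpow_mul, one_div_mul_cancel hp.ne', ENNReal.rpow_one]
    _ ≤ _ := by gcongr

theorem weakLpNorm_le_two_mul_halfSubsetNorm (hp0 : 0 < p) (hp1 : p ≤ 1) (hF : Measurable F)
    (hW : weakLpNorm ω p F ≠ ∞) : weakLpNorm ω p F ≤ 2 * halfSubsetNorm ω p F := by
  refine iSup₂_le fun l hl => ?_
  set E := {x | l < F x}
  rcases eq_or_ne (ω E) 0 with hE0 | hE0
  · simp [hE0, hp0]
  have hEtop : ω E ≠ ∞ := ((meas_lt_le_weakLpNorm_div_rpow hp0 hl.ne').trans_lt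
    (ENNReal.rpow_lt_top_of_nonneg hp0.le (ENNReal.div_ne_top hW hl.ne'))).ne
  have hE : l * ω E ^ (1/p) / 2 ≤ ⨅ (B : Set X) (_ : MeasurableSet B) (_ : B ⊆ E)
      (_ : ω E / 2 ≤ ω B), ω E ^ (1/p - 1) * ∫⁻ x in B, F x ∂ω := by
    refine le_iInf₂ fun B _ => le_iInf₂ fun hBE hB => ?_
    calc l * ω E ^ (1/p) / 2 = ω E ^ (1/p - 1) * (l * (ω E / 2)) := by
          conv_lhs => rw [← sub_add_cancel (1/p) 1]
          rw [ENNReal.rpow_add_of_nonneg _ _ (sub_nonneg.2 (one_le_one_div hp0 hp1)) zero_le_one,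
            ENNReal.rpow_one, ENNReal.div_eq_inv_mul, ENNReal.div_eq_inv_mul]
          ring
      _ ≤ ω E ^ (1/p - 1) * ∫⁻ _ in B, l ∂ω := by
          rw [setLIntegral_const]; gcongr
      _ ≤ ω E ^ (1/p - 1) * ∫⁻ x in B, F x ∂ω :=
          mul_le_mul_right (setLIntegral_mono hF fun x hx => (hBE hx).le) _
  calc l * ω E ^ (1/p) = 2 * (l * ω E ^ (1/p) / 2) :=
        (ENNReal.mul_div_cancel two_ne_zero ofNat_ne_top).symm
    _ ≤ 2 * halfSubsetNorm ω p F := by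
        gcongr
        exact hE.trans (le_iSup₂_of_le E (measurableSet_lt measurable_const hF) <|
          le_iSup₂_of_le hE0 hEtop le_rfl)

theorem setLIntegral_le_of_meas_lt_le_div_rpow (hp0 : 0 < p) (hp1 : p ≤ 1) (hF : Measurable F)
    {B : Set X} (hB : MeasurableSet B) {M lam : ℝ≥0∞} (hlam : lam ≠ ∞)
    (hFB : ∀ x ∈ B, F x ≤ lam) (hM : ∀ t, t ≠ 0 → ω {x | t < F x} ≤ (M / t) ^ p) :
    ∫⁻ x in B, F x ∂ω ≤ 2 * ω B ^ (1/2 : ℝ) * M ^ (p/2) * lam ^ (1 - p/2) := by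
  set g : ℝ → ℝ≥0∞ := fun t => ω B ^ (1/2 : ℝ) * M ^ (p/2) * ENNReal.ofReal t ^ (-(p/2))
  have hpt : ∀ t ∈ Ioi (0:ℝ), ω (B ∩ {x | ENNReal.ofReal t < F x}) ≤
      (Ioc 0 lam.toReal).indicator g t := by
    intro t ht
    by_cases htl : t ≤ lam.toReal
    · rw [indicator_of_mem (show t ∈ Ioc 0 lam.toReal from ⟨ht, htl⟩)]
      set m := ω (B ∩ {x | ENNReal.ofReal t < F x})
      have hm : m ≤ (M / ENNReal.ofReal t) ^ p :=
        (measure_mono inter_subset_right).trans (hM _ (by simpa using ht))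
      -- the geometric mean of the two bounds on `m` is integrable near `t = 0`, even for `p = 1`
      calc m = m ^ (1/2 : ℝ) * m ^ (1/2 : ℝ) := by
            rw [← ENNReal.rpow_add_of_nonneg _ _ (by norm_num) (by norm_num)]; norm_num
        _ ≤ ω B ^ (1/2 : ℝ) * ((M / ENNReal.ofReal t) ^ p) ^ (1/2 : ℝ) := by
            gcongr; exact measure_mono inter_subset_left
        _ = g t := by
            rw [← ENNReal.rpow_mul, mul_one_div, ENNReal.div_rpow_of_nonneg _ _ (by positivity),
              ENNReal.div_eq_inv_mul, ← ENNReal.rpow_neg]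
            ring
    · rw [indicator_of_notMem fun h => htl h.2, nonpos_iff_eq_zero]
      convert measure_empty (μ := ω)
      refine eq_empty_of_forall_notMem fun x hx => ?_
      exact (hFB x hx.1).not_gt <|
        ((ENNReal.lt_ofReal_iff_toReal_lt hlam).2 (not_le.1 htl)).trans hx.2
  calc ∫⁻ x in B, F x ∂ω ≤ ∫⁻ t in Ioi 0, ω.restrict B {x | ENNReal.ofReal t < F x} :=
        lintegral_le_lintegral_meas_ofReal_lt hF.aemeasurable
          ((ae_restrict_iff' hB).2 (ae_of_all _ fun x hx => ((hFB x hx).trans_lt hlam.lt_top).ne))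
    _ ≤ ∫⁻ t in Ioi 0, (Ioc 0 lam.toReal).indicator g t :=
        setLIntegral_mono' measurableSet_Ioi fun t ht => by
          rw [Measure.restrict_apply (measurableSet_lt measurable_const hF), inter_comm]
          exact hpt t ht
    _ = ω B ^ (1/2 : ℝ) * M ^ (p/2) *
          ∫⁻ t in Ioc 0 lam.toReal, ENNReal.ofReal t ^ (-(p/2)) := by
        rw [lintegral_indicator measurableSet_Ioc, Measure.restrict_restrict measurableSet_Ioc,
          inter_eq_self_of_subset_left Ioc_subset_Ioi_self, lintegral_const_mul _ (by fun_prop)]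
    _ ≤ ω B ^ (1/2 : ℝ) * M ^ (p/2) * (2 * lam ^ (1 - p/2)) := by
        gcongr
        simpa [ofReal_toReal hlam] using
          lintegral_Ioc_ofReal_rpow_neg_le (q := p/2) (by linarith) (toReal_nonneg (a := lam))
    _ = 2 * ω B ^ (1/2 : ℝ) * M ^ (p/2) * lam ^ (1 - p/2) := by ring

theorem exists_half_subset_mul_setLIntegral_le (hp0 : 0 < p) (hp1 : p ≤ 1) (hF : Measurable F)
    {A : Set X} (hA : MeasurableSet A) (hA0 : ω A ≠ 0) (hAtop : ω A ≠ ∞)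
    {M : ℝ≥0∞} (hM0 : M ≠ 0) (hMtop : M ≠ ∞) (hWM : weakLpNorm ω p F ≤ M) :
    ∃ B, MeasurableSet B ∧ B ⊆ A ∧ ω A / 2 ≤ ω B ∧
      ω A ^ (1/p - 1) * ∫⁻ x in B, F x ∂ω ≤ 2 ^ (1/p + 1/2) * M := by
  have hM : ∀ t, t ≠ 0 → ω {x | t < F x} ≤ (M / t) ^ p := fun t ht =>
    (meas_lt_le_weakLpNorm_div_rpow hp0 ht).trans (by gcongr)
  have hA2top : ω A / 2 ≠ ∞ := ENNReal.div_ne_top hAtop two_ne_zero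
  set c := (ω A / 2) ^ (1/p)
  have hc0 : c ≠ 0 := (ENNReal.rpow_pos (ENNReal.half_pos hA0) hA2top).ne'
  have hctop : c ≠ ∞ := ENNReal.rpow_ne_top_of_nonneg (by positivity) hA2top
  -- `F` exceeds `lam` on a set of measure at most `(M / lam) ^ p = ω A / 2`
  set lam := M / c
  have hlam0 : lam ≠ 0 := ENNReal.div_ne_zero.2 ⟨hM0, hctop⟩
  have hlamtop : lam ≠ ∞ := ENNReal.div_ne_top hMtop hc0
  have hlam : (M / lam) ^ p = ω A / 2 := by
    rw [ENNReal.div_div_cancel hM0 hMtop, ← ENNReal.rpow_mul, one_div_mul_cancel hp0.ne',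
      ENNReal.rpow_one]
  set B := A ∩ {x | F x ≤ lam}
  have hB : MeasurableSet B := hA.inter (measurableSet_le hF measurable_const)
  refine ⟨B, hB, inter_subset_left, ?_, ?_⟩
  · have hcover : ω A ≤ ω B + ω A / 2 :=
      calc ω A ≤ ω (B ∪ {x | lam < F x}) := measure_mono fun x hx => by
            by_cases hx' : F x ≤ lam
            exacts [Or.inl ⟨hx, hx'⟩, Or.inr (not_le.1 hx')]
        _ ≤ ω B + ω {x | lam < F x} := measure_union_le _ _
        _ ≤ ω B + ω A / 2 := by gcongr; exact hlam ▸ hM lam hlam0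
    rw [← ENNReal.sub_half hAtop]
    exact tsub_le_iff_right.2 hcover
  set s := 1/p - 1/2 with hs_def
  have hs : 0 ≤ s := by linarith [one_le_one_div hp0 hp1]
  have hAs0 : ω A ^ s ≠ 0 := (ENNReal.rpow_pos (pos_iff_ne_zero.2 hA0) hAtop).ne'
  have hAstop : ω A ^ s ≠ ∞ := ENNReal.rpow_ne_top_of_nonneg hs hAtop
  have hlam_pow : lam ^ (1 - p/2) = M ^ (1 - p/2) / (ω A ^ s / 2 ^ s) := by
    rw [ENNReal.div_rpow_of_nonneg _ _ (by linarith), ← ENNReal.rpow_mul,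
      show 1/p * (1 - p/2) = s by rw [hs_def]; field_simp, ENNReal.div_rpow_of_nonneg _ _ hs]
  calc ω A ^ (1/p - 1) * ∫⁻ x in B, F x ∂ω
      ≤ ω A ^ (1/p - 1) * (2 * ω A ^ (1/2 : ℝ) * M ^ (p/2) * lam ^ (1 - p/2)) := by
        gcongr
        refine (setLIntegral_le_of_meas_lt_le_div_rpow hp0 hp1 hF hB hlamtop
          (fun x hx => hx.2) hM).trans ?_
        gcongr
        exact inter_subset_left
    _ = 2 * (ω A ^ (1/p - 1) * ω A ^ (1/2 : ℝ)) * (M ^ (p/2) * M ^ (1 - p/2)) *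
          (ω A ^ s / 2 ^ s)⁻¹ := by
        rw [hlam_pow, ENNReal.div_eq_inv_mul (a := M ^ _)]
        ring
    _ = 2 * M * (ω A ^ s * (ω A ^ s / 2 ^ s)⁻¹) := by
        rw [← ENNReal.rpow_add _ _ hA0 hAtop, ← ENNReal.rpow_add _ _ hM0 hMtop, add_sub_cancel,
          ENNReal.rpow_one, show 1/p - 1 + 1/2 = s by rw [hs_def]; ring]
        ring
    _ = 2 ^ (1/p + 1/2) * M := by
        rw [← div_eq_mul_inv, ENNReal.div_div_cancel hAs0 hAstop,
          show 1/p + 1/2 = 1 + s by ring, ENNReal.rpow_add_of_nonneg _ _ zero_le_one hs,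
          ENNReal.rpow_one]
        ring

theorem halfSubsetNorm_le (hp0 : 0 < p) (hp1 : p ≤ 1) (hF : Measurable F) :
    halfSubsetNorm ω p F ≤ 2 ^ (1/p + 1/2) * weakLpNorm ω p F := by
  have hC0 : (2 : ℝ≥0∞) ^ (1/p + 1/2) ≠ 0 := by positivity
  have hCtop : (2 : ℝ≥0∞) ^ (1/p + 1/2) ≠ ∞ :=
    ENNReal.rpow_ne_top_of_nonneg (by positivity) ofNat_ne_top
  refine iSup₂_le fun A hA => iSup₂_le fun hA0 hAtop => ?_
  -- comparing with every `d > C * W` instead of `C * W` itself also covers `W = 0`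
  refine le_of_forall_gt_imp_ge_of_dense fun d hd => ?_
  rcases eq_or_ne d ∞ with rfl | hdtop
  · exact le_top
  obtain ⟨B, hBm, hBA, hB, hBle⟩ :=
    exists_half_subset_mul_setLIntegral_le hp0 hp1 hF hA hA0 hAtop (M := d / 2 ^ (1/p + 1/2))
      (ENNReal.div_ne_zero.2 ⟨(pos_of_gt hd).ne', hCtop⟩) (ENNReal.div_ne_top hdtop hC0)
      ((ENNReal.lt_div_iff_mul_lt (Or.inl hC0) (Or.inl hCtop)).2 (by rwa [mul_comm] at hd)).le
  rw [ENNReal.mul_div_cancel hC0 hCtop] at hBle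
  exact iInf₂_le_of_le B hBm <| iInf₂_le_of_le hBA hB hBle

end WeakLp

/-- characterization of the classical weak `L^p` quasi-norm, `p ∈ (0,1]`. -/
theorem stmt1 (p : ℝ) (hp0 : 0 < p) (hp1 : p ≤ 1) :
    ∃ C : ℝ≥0∞, 1 ≤ C ∧ C ≠ ∞ ∧
      ∀ (X : Type) [MeasurableSpace X] (ω : MeasureTheory.Measure X) (f : X → ℝ),
        Measurable f →
        (⨆ (l : ℝ≥0∞) (_ : 0 < l), l * ω {x | l < (‖f x‖₊ : ℝ≥0∞)} ^ (1/p)) ≠ ∞ →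
        ((⨆ (l : ℝ≥0∞) (_ : 0 < l), l * ω {x | l < (‖f x‖₊ : ℝ≥0∞)} ^ (1/p)) ≤
            C * ⨆ (A : Set X) (_ : MeasurableSet A) (_ : ω A ≠ 0) (_ : ω A ≠ ∞),
              ⨅ (B : Set X) (_ : MeasurableSet B) (_ : B ⊆ A) (_ : ω A / 2 ≤ ω B),
                ω A ^ (1/p - 1) * ∫⁻ x in B, (‖f x‖₊ : ℝ≥0∞) ∂ω) ∧
        ((⨆ (A : Set X) (_ : MeasurableSet A) (_ : ω A ≠ 0) (_ : ω A ≠ ∞),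
              ⨅ (B : Set X) (_ : MeasurableSet B) (_ : B ⊆ A) (_ : ω A / 2 ≤ ω B),
                ω A ^ (1/p - 1) * ∫⁻ x in B, (‖f x‖₊ : ℝ≥0∞) ∂ω) ≤
            C * ⨆ (l : ℝ≥0∞) (_ : 0 < l), l * ω {x | l < (‖f x‖₊ : ℝ≥0∞)} ^ (1/p)) := by
  have h2C : (2 : ℝ≥0∞) ≤ 2 ^ (1/p + 1/2) := by
    simpa using ENNReal.rpow_le_rpow_of_exponent_le one_le_two
      (show (1 : ℝ) ≤ 1/p + 1/2 by linarith [one_le_one_div hp0 hp1])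
  refine ⟨2 ^ (1/p + 1/2), one_le_two.trans h2C,
    ENNReal.rpow_ne_top_of_nonneg (by positivity) ofNat_ne_top, fun X _ ω f hf hW => ⟨?_, ?_⟩⟩
  · exact (weakLpNorm_le_two_mul_halfSubsetNorm hp0 hp1 hf.nnnorm.coe_nnreal_ennreal hW).trans
      (mul_le_mul_left h2C _)
  · exact halfSubsetNorm_le hp0 hp1 hf.nnnorm.coe_nnreal_ennreal
end

section
/- Let (X, μ, ω) be a σ-finite setting and let S be a size satisfying the support-splitting inequality S(f)(A) ≤ K[S(f 1_B)(A) + S(f 1_{B^c})(A)] with constant K ≥ 1. Fix r ∈ (0,∞) and define S_r(f)(A) = (S(|f|^r)(A))^{1/r}. Let ρ > 0, δ ∈ [0,1], f measurable, and Ω measurable with ‖f·1_{Ω^c}‖_{L^∞_μ(S_r)} ≤ K^{-1/r}(1 − δ^r)^{1/r}·ρ. Then μ(S_r(f) > ρ) ≤ μ(S_r(f·1_Ω) > K^{-1/r}·δ·ρ). -/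
open MeasureTheory ENNReal Set Filter

variable {X : Type*} [MeasurableSpace X]

section SizeR

variable {α : Type*} {𝒜 : Set (Set α)} {S : (α → ℝ≥0∞) → Set α → ℝ≥0∞} {r : ℝ}

theorem slm_le_slm_of_outLinf_le [MeasurableSpace α] {μ : MeasureTheory.OuterMeasure α}
    {S' : (α → ℝ≥0∞) → Set α → ℝ≥0∞} {f g : α → ℝ≥0∞} {ρ l : ℝ≥0∞}
    (h : ∀ E, MeasurableSet E → outLinf 𝒜 S' (Eᶜ.indicator g) ≤ l →
      outLinf 𝒜 S (Eᶜ.indicator f) ≤ ρ) :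
    slm μ 𝒜 S f ρ ≤ slm μ 𝒜 S' g l :=
  le_iInf₂ fun E hE => le_iInf fun hg => iInf₂_le_of_le E hE (iInf_le_of_le (h E hE hg) le_rfl)

theorem sizeR_le_iff (hr : 0 < r) {f : α → ℝ≥0∞} {A : Set α} {ρ : ℝ≥0∞} :
    sizeR S r f A ≤ ρ ↔ S (fun x => f x ^ r) A ≤ ρ ^ r := by
  rw [sizeR, one_div, ENNReal.rpow_inv_le_iff hr]

theorem sizeR_le_of_outLinf_le {f : α → ℝ≥0∞} {A : Set α} (hA : A ∈ 𝒜) {ρ : ℝ≥0∞}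
    (h : outLinf 𝒜 (sizeR S r) f ≤ ρ) : sizeR S r f A ≤ ρ :=
  (le_iSup₂ (f := fun A _ => sizeR S r f A) A hA).trans h

theorem sizeR_mono [MeasurableSpace α] {ω : Measure α} (hr : 0 < r)
    (hmono : ∀ f g : α → ℝ≥0∞, ∀ A ∈ 𝒜, (∀ᵐ x ∂ω, f x ≤ g x) → S f A ≤ S g A)
    {f g : α → ℝ≥0∞} {A : Set α} (hA : A ∈ 𝒜) (hfg : f ≤ g) :
    sizeR S r f A ≤ sizeR S r g A :=
  ENNReal.rpow_le_rpow
    (hmono _ _ A hA (Eventually.of_forall fun x => ENNReal.rpow_le_rpow (hfg x) hr.le))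
    (by positivity)

theorem indicator_rpow (hr : 0 < r) (B : Set α) (g : α → ℝ≥0∞) :
    (fun x => B.indicator g x ^ r) = B.indicator (fun x => g x ^ r) :=
  (Set.indicator_comp_of_zero (g := fun y : ℝ≥0∞ => y ^ r) (ENNReal.zero_rpow_of_pos hr)).symm

theorem rpow_neg_one_div_mul_mul_rpow (hr : 0 < r) (K a ρ : ℝ≥0∞) :
    (K ^ (-(1/r)) * a ^ (1/r) * ρ) ^ r = K⁻¹ * a * ρ ^ r := by
  rw [ENNReal.mul_rpow_of_nonneg _ _ hr.le, ENNReal.mul_rpow_of_nonneg _ _ hr.le,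
    ← ENNReal.rpow_mul, ← ENNReal.rpow_mul, neg_mul, one_div, inv_mul_cancel₀ hr.ne',
    ENNReal.rpow_neg_one, ENNReal.rpow_one]

/-- The two thresholds are the `r`-th roots of the splitting
`ρ^r / K = δ^r ρ^r / K + (1 - δ^r) ρ^r / K`, so the splitting inequality for `S`, applied
to `g^r`, closes up at exactly `ρ^r`. -/
theorem sizeR_le_of_split [MeasurableSpace α] {K : ℝ≥0∞} (hK : K ≠ 0) (hKtop : K ≠ ∞)
    (hsplit : ∀ (f : α → ℝ≥0∞), ∀ A ∈ 𝒜, ∀ B : Set α, MeasurableSet B →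
      S f A ≤ K * (S (B.indicator f) A + S (Bᶜ.indicator f) A))
    (hr : 0 < r) {ρ δ : ℝ≥0∞} (hδ : δ ≤ 1) {g : α → ℝ≥0∞} {A : Set α} (hA : A ∈ 𝒜)
    {B : Set α} (hB : MeasurableSet B)
    (hin : sizeR S r (B.indicator g) A ≤ K ^ (-(1/r)) * δ * ρ)
    (hout : sizeR S r (Bᶜ.indicator g) A ≤ K ^ (-(1/r)) * (1 - δ ^ r) ^ (1/r) * ρ) :
    sizeR S r g A ≤ ρ := by
  have hδ' : K ^ (-(1/r)) * δ * ρ = K ^ (-(1/r)) * (δ ^ r) ^ (1/r) * ρ := by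
    rw [one_div, ENNReal.rpow_rpow_inv hr.ne']
  rw [hδ', sizeR_le_iff hr, indicator_rpow hr, rpow_neg_one_div_mul_mul_rpow hr] at hin
  rw [sizeR_le_iff hr, indicator_rpow hr, rpow_neg_one_div_mul_mul_rpow hr] at hout
  rw [sizeR_le_iff hr]
  calc S (fun x => g x ^ r) A
      ≤ K * (S (B.indicator fun x => g x ^ r) A + S (Bᶜ.indicator fun x => g x ^ r) A) :=
        hsplit _ A hA B hB
    _ ≤ K * (K⁻¹ * δ ^ r * ρ ^ r + K⁻¹ * (1 - δ ^ r) * ρ ^ r) := by gcongr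
    _ = K * K⁻¹ * ((δ ^ r + (1 - δ ^ r)) * ρ ^ r) := by ring
    _ = ρ ^ r := by
        rw [ENNReal.mul_inv_cancel hK hKtop, add_tsub_cancel_of_le
          (ENNReal.rpow_le_one hδ hr.le), one_mul, one_mul]

end SizeR

theorem stmt5_general {X : Type*} [MeasurableSpace X] (μ : MeasureTheory.OuterMeasure X)
    (ω : MeasureTheory.Measure X) (𝒜 : Set (Set X)) (S : (X → ℝ≥0∞) → Set X → ℝ≥0∞)
    (hmono : ∀ f g : X → ℝ≥0∞, ∀ A ∈ 𝒜, (∀ᵐ x ∂ω, f x ≤ g x) → S f A ≤ S g A)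
    (K : ℝ≥0∞) (hK : 1 ≤ K) (hKtop : K ≠ ∞)
    (hsplit : ∀ (f : X → ℝ≥0∞), ∀ A ∈ 𝒜, ∀ B : Set X, MeasurableSet B →
      S f A ≤ K * (S (B.indicator f) A + S (Bᶜ.indicator f) A))
    (r : ℝ) (hr : 0 < r) (ρ : ℝ≥0∞)
    (δ : ℝ≥0∞) (hδ : δ ≤ 1)
    (f : X → ℝ≥0∞) (Ω : Set X) (hΩ : MeasurableSet Ω)
    (hbound : outLinf 𝒜 (sizeR S r) (Ωᶜ.indicator f) ≤
      K ^ (-(1/r)) * (1 - δ ^ r) ^ (1/r) * ρ) :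
    slm μ 𝒜 (sizeR S r) f ρ ≤
      slm μ 𝒜 (sizeR S r) (Ω.indicator f) (K ^ (-(1/r)) * δ * ρ) := by
  have hK0 : K ≠ 0 := (zero_lt_one.trans_le hK).ne'
  refine slm_le_slm_of_outLinf_le fun E _ hE => iSup₂_le fun A hA => ?_
  refine sizeR_le_of_split hK0 hKtop hsplit hr hδ hA hΩ ?_ ?_
  · rw [Set.indicator_indicator, Set.inter_comm, ← Set.indicator_indicator]
    exact sizeR_le_of_outLinf_le hA hE
  · exact (sizeR_mono hr hmono hA (Set.indicator_mono (Set.indicator_le_self _ _))).trans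
      (sizeR_le_of_outLinf_le hA hbound)

/-- super level measure comparison lemma for `S_r` under support splitting. -/
theorem stmt5 {X : Type*} [MeasurableSpace X] (μ : MeasureTheory.OuterMeasure X)
    (ω : MeasureTheory.Measure X) (hset : SigmaFiniteSetting μ ω)
    (𝒜 : Set (Set X)) (S : (X → ℝ≥0∞) → Set X → ℝ≥0∞)
    (hmono : ∀ f g : X → ℝ≥0∞, ∀ A ∈ 𝒜, (∀ᵐ x ∂ω, f x ≤ g x) → S f A ≤ S g A)
    (K : ℝ≥0∞) (hK : 1 ≤ K) (hKtop : K ≠ ∞)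
    (hsplit : ∀ (f : X → ℝ≥0∞), ∀ A ∈ 𝒜, ∀ B : Set X, MeasurableSet B →
      S f A ≤ K * (S (B.indicator f) A + S (Bᶜ.indicator f) A))
    (r : ℝ) (hr : 0 < r) (ρ : ℝ≥0∞) (hρ0 : 0 < ρ) (hρtop : ρ ≠ ∞)
    (δ : ℝ≥0∞) (hδ : δ ≤ 1)
    (f : X → ℝ≥0∞) (Ω : Set X) (hΩ : MeasurableSet Ω)
    (hbound : outLinf 𝒜 (sizeR S r) (Ωᶜ.indicator f) ≤
      K ^ (-(1/r)) * (1 - δ ^ r) ^ (1/r) * ρ) :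
    slm μ 𝒜 (sizeR S r) f ρ ≤
      slm μ 𝒜 (sizeR S r) (Ω.indicator f) (K ^ (-(1/r)) * δ * ρ) :=
  stmt5_general μ ω 𝒜 S hmono K hK hKtop hsplit r hr ρ δ hδ f Ω hΩ hbound
end

section
/- Let (X, μ, ω) be a σ-finite setting, r ∈ (0,∞), and f ∈ L^∞_μ(ℓ^r_ω). Suppose A is a measurable set with 0 < μ(A) < ∞ and ℓ^r_ω(f)(A) ≥ ρ for some ρ > 0. Then for every λ ∈ (0, ρ), one has μ(A) ≤ (‖f‖^r_{L^∞_μ(ℓ^r_ω)} / (ρ^r − λ^r)) · μ(ℓ^r_ω(f) > λ). -/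
open MeasureTheory ENNReal Set Filter

variable {X : Type*} [MeasurableSpace X]

/-!
For every `E` admissible in the infimum defining `μ(ℓ^r_ω(f) > λ)`, split `∫_A f^r dω` along `E`.
The part over `A ∩ E` is at most `‖f‖^r μ(E)`, because `A ∩ E` is either a test set or
`μ`-null, hence `ω`-null; the part over `A \ E` is at most `λ^r μ(A)`, because `f 1_{Eᶜ}` has
outer norm at most `λ`. Since `ρ^r μ(A) ≤ ∫_A f^r dω`, this gives
`(ρ^r - λ^r) μ(A) ≤ ‖f‖^r μ(E)`, and it remains to take the infimum over `E`.
-/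

section EllR

variable {μ : OuterMeasure X} {ω : Measure X} {r : ℝ}

lemma ellr_rpow (hr : 0 < r) (f : X → ℝ≥0∞) (B : Set X) :
    ellr μ ω r f B ^ r = (∫⁻ x in B, f x ^ r ∂ω) / μ B := by
  rw [ellr, ENNReal.mul_rpow_of_nonneg _ _ hr.le, ← ENNReal.rpow_mul, ← ENNReal.rpow_mul,
    neg_mul, one_div_mul_cancel hr.ne', ENNReal.rpow_neg_one, ENNReal.rpow_one,
    div_eq_mul_inv, mul_comm]

lemma ellr_le_iff (hr : 0 < r) (f : X → ℝ≥0∞) {B : Set X} (hB0 : μ B ≠ 0) (hBt : μ B ≠ ∞)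
    {c : ℝ≥0∞} : ellr μ ω r f B ≤ c ↔ ∫⁻ x in B, f x ^ r ∂ω ≤ c ^ r * μ B := by
  rw [← ENNReal.rpow_le_rpow_iff hr, ellr_rpow hr, ENNReal.div_le_iff hB0 hBt]

lemma le_ellr_iff (hr : 0 < r) (f : X → ℝ≥0∞) {B : Set X} (hB0 : μ B ≠ 0) (hBt : μ B ≠ ∞)
    {c : ℝ≥0∞} : c ≤ ellr μ ω r f B ↔ c ^ r * μ B ≤ ∫⁻ x in B, f x ^ r ∂ω := by
  rw [← ENNReal.rpow_le_rpow_iff hr, ellr_rpow hr,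
    ENNReal.le_div_iff_mul_le (Or.inl hB0) (Or.inl hBt)]

lemma setLIntegral_rpow_le_outLinf_rpow_mul (hac : ∀ B : Set X, μ B = 0 → ω B = 0)
    (hr : 0 < r) (f : X → ℝ≥0∞) {B : Set X} (hB : MeasurableSet B) (hBt : μ B ≠ ∞) :
    ∫⁻ x in B, f x ^ r ∂ω ≤ outLinf (goodSets μ) (ellr μ ω r) f ^ r * μ B := by
  by_cases hB0 : μ B = 0
  · simp [setLIntegral_measure_zero _ _ (hac B hB0)]
  · exact (ellr_le_iff hr f hB0 hBt).1 (le_biSup _ ⟨hB, hB0, hBt⟩)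

lemma setLIntegral_compl_indicator_rpow (hr : 0 < r) (f : X → ℝ≥0∞) {E : Set X}
    (hE : MeasurableSet E) (A : Set X) :
    ∫⁻ x in A, Eᶜ.indicator f x ^ r ∂ω = ∫⁻ x in A \ E, f x ^ r ∂ω := by
  have hpow : (fun x => Eᶜ.indicator f x ^ r) = Eᶜ.indicator (fun x => f x ^ r) :=
    (indicator_comp_of_zero (g := fun t : ℝ≥0∞ => t ^ r) (ENNReal.zero_rpow_of_pos hr)).symm
  rw [hpow, setLIntegral_indicator hE.compl, inter_comm, sdiff_eq]

lemma rpow_mul_le_of_le_ellr (hac : ∀ B : Set X, μ B = 0 → ω B = 0) (hr : 0 < r)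
    (f : X → ℝ≥0∞) {A : Set X} (hA : A ∈ goodSets μ) {ρ : ℝ≥0∞} (hAρ : ρ ≤ ellr μ ω r f A)
    {l : ℝ≥0∞} {E : Set X} (hE : MeasurableSet E)
    (hEl : outLinf (goodSets μ) (ellr μ ω r) (Eᶜ.indicator f) ≤ l) :
    ρ ^ r * μ A ≤ outLinf (goodSets μ) (ellr μ ω r) f ^ r * μ E + l ^ r * μ A := by
  obtain ⟨hAm, hA0, hAt⟩ := hA
  have hAEt : μ (A ∩ E) ≠ ∞ := ne_top_of_le_ne_top hAt (μ.mono inter_subset_left)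
  calc ρ ^ r * μ A ≤ ∫⁻ x in A, f x ^ r ∂ω := (le_ellr_iff hr f hA0 hAt).1 hAρ
    _ = ∫⁻ x in A ∩ E, f x ^ r ∂ω + ∫⁻ x in A, Eᶜ.indicator f x ^ r ∂ω := by
      rw [setLIntegral_compl_indicator_rpow hr f hE, lintegral_inter_add_sdiff _ _ hE]
    _ ≤ outLinf (goodSets μ) (ellr μ ω r) f ^ r * μ (A ∩ E)
        + outLinf (goodSets μ) (ellr μ ω r) (Eᶜ.indicator f) ^ r * μ A :=
      add_le_add (setLIntegral_rpow_le_outLinf_rpow_mul hac hr f (hAm.inter hE) hAEt)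
        (setLIntegral_rpow_le_outLinf_rpow_mul hac hr _ hAm hAt)
    _ ≤ outLinf (goodSets μ) (ellr μ ω r) f ^ r * μ E + l ^ r * μ A := by
      gcongr
      exact inter_subset_right

end EllR

lemma le_mul_slm_of_forall {μ : OuterMeasure X} {𝒜 : Set (Set X)}
    {S : (X → ℝ≥0∞) → Set X → ℝ≥0∞} {f : X → ℝ≥0∞} {l a c : ℝ≥0∞} (hc0 : c ≠ 0) (hct : c ≠ ∞)
    (h : ∀ E, MeasurableSet E → outLinf 𝒜 S (Eᶜ.indicator f) ≤ l → a ≤ c * μ E) :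
    a ≤ c * slm μ 𝒜 S f l := by
  simp only [slm, ENNReal.mul_iInf_of_ne hc0 hct]
  exact le_iInf₂ fun E hE => le_iInf (h E hE)

theorem stmt6_general {X : Type*} [MeasurableSpace X] (μ : MeasureTheory.OuterMeasure X)
    (ω : MeasureTheory.Measure X) (hset : SigmaFiniteSetting μ ω)
    (r : ℝ) (hr : 0 < r) (f : X → ℝ≥0∞)
    (hf : outLinf (goodSets μ) (ellr μ ω r) f ≠ ∞)
    (A : Set X) (hA : A ∈ goodSets μ)
    (ρ : ℝ≥0∞) (hρ0 : 0 < ρ) (hρtop : ρ ≠ ∞) (hAρ : ρ ≤ ellr μ ω r f A)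
    (l : ℝ≥0∞) (hlρ : l < ρ) :
    μ A ≤ (outLinf (goodSets μ) (ellr μ ω r) f) ^ r / (ρ ^ r - l ^ r) *
      slm μ (goodSets μ) (ellr μ ω r) f l := by
  set N := outLinf (goodSets μ) (ellr μ ω r) f
  have hρN : ρ ≤ N := hAρ.trans (le_biSup _ hA)
  have hN0 : N ^ r ≠ 0 := (ENNReal.rpow_pos (hρ0.trans_le hρN) hf).ne'
  have hNt : N ^ r ≠ ∞ := ENNReal.rpow_ne_top_of_nonneg hr.le hf
  have hD0 : ρ ^ r - l ^ r ≠ 0 := (tsub_pos_of_lt (ENNReal.rpow_lt_rpow hlρ hr)).ne'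
  have hDt : ρ ^ r - l ^ r ≠ ∞ :=
    ne_top_of_le_ne_top (ENNReal.rpow_ne_top_of_nonneg hr.le hρtop) tsub_le_self
  have hsub : (ρ ^ r - l ^ r) * μ A ≤ N ^ r * slm μ (goodSets μ) (ellr μ ω r) f l := by
    refine le_mul_slm_of_forall hN0 hNt fun E hE hEl => ?_
    rw [ENNReal.sub_mul fun _ _ => hA.2.2, tsub_le_iff_right]
    exact rpow_mul_le_of_le_ellr hset.ac hr f hA hAρ hE hEl
  rw [← ENNReal.mul_div_right_comm, ENNReal.le_div_iff_mul_le (Or.inl hD0) (Or.inl hDt),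
    mul_comm]
  exact hsub

/-- Lemma comparing `μ(A)` with the super level measure for `ℓ^r_ω`. -/
theorem stmt6 {X : Type*} [MeasurableSpace X] (μ : MeasureTheory.OuterMeasure X)
    (ω : MeasureTheory.Measure X) (hset : SigmaFiniteSetting μ ω)
    (r : ℝ) (hr : 0 < r) (f : X → ℝ≥0∞)
    (hf : outLinf (goodSets μ) (ellr μ ω r) f ≠ ∞)
    (A : Set X) (hA : A ∈ goodSets μ)
    (ρ : ℝ≥0∞) (hρ0 : 0 < ρ) (hρtop : ρ ≠ ∞) (hAρ : ρ ≤ ellr μ ω r f A)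
    (l : ℝ≥0∞) (hl0 : 0 < l) (hlρ : l < ρ) :
    μ A ≤ (outLinf (goodSets μ) (ellr μ ω r) f) ^ r / (ρ ^ r - l ^ r) *
      slm μ (goodSets μ) (ellr μ ω r) f l :=
  stmt6_general μ ω hset r hr f hf A hA ρ hρ0 hρtop hAρ l hlρ
end
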